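/- arXiv:2202.04640 — 8 statements merged into one kernel-verified Lean document; each statement's English description precedes it below -/
import Mathlib

section
/- Let h : 𝒳 × 𝒴 → ℝ be differentiable, convex-concave, with blockwise smoothness constants (Λ^xx, Λ^xy, Λ^yy), and let α > 0. Define r^h_α(x, y) := ((Λ^xx + αΛ^xy)/2)‖x‖² + ((Λ^yy + α⁻¹Λ^xy)/2)‖y‖² and the gradient operator Φ^h(x, y) := (∇_x h(x, y), −∇_y h(x, y)). Then Φ^h is 1-relatively Lipschitz with respect to r^h_α: for all w, v, z ∈ 𝒳 × 𝒴, ⟨∇_x h(w) − ∇_x h(z), w^x − v^x⟩ − ⟨∇_y h(w) − ∇_y h(z), w^y − v^y⟩ ≤ V^{r^h_α}_z(w) + V^{r^h_α}_w(v), where V^{r^h_α}_z(w) = ((Λ^xx + αΛ^xy)/2)‖w^x − z^x‖² + ((Λ^yy + α⁻¹Λ^xy)/2)‖w^y − z^y‖². -/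
open scoped RealInnerProductSpace

lemma stmt_2_aux (Λxx Λxy Λyy α a b c d : ℝ) (hΛxx : 0 ≤ Λxx) (hΛxy : 0 ≤ Λxy)
    (hΛyy : 0 ≤ Λyy) (hα : 0 < α) :
    (Λxx * a + Λxy * b) * c + (Λxy * a + Λyy * b) * d ≤
      ((Λxx + α * Λxy) / 2 * a ^ 2 + (Λyy + α⁻¹ * Λxy) / 2 * b ^ 2)
        + ((Λxx + α * Λxy) / 2 * c ^ 2 + (Λyy + α⁻¹ * Λxy) / 2 * d ^ 2) := by
  have hαi0 : 0 ≤ α⁻¹ := (inv_pos.mpr hα).le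
  have hαne : α ≠ 0 := hα.ne'
  have key1 : Λxy * (b * c) ≤ α * Λxy / 2 * c ^ 2 + α⁻¹ * Λxy / 2 * b ^ 2 := by
    have e : α * Λxy / 2 * c ^ 2 + α⁻¹ * Λxy / 2 * b ^ 2 - Λxy * (b * c)
        = Λxy * α⁻¹ / 2 * (b - α * c) ^ 2 := by field_simp; ring
    nlinarith [mul_nonneg (mul_nonneg hΛxy hαi0) (sq_nonneg (b - α * c)), e]
  have key2 : Λxy * (a * d) ≤ α * Λxy / 2 * a ^ 2 + α⁻¹ * Λxy / 2 * d ^ 2 := by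
    have e : α * Λxy / 2 * a ^ 2 + α⁻¹ * Λxy / 2 * d ^ 2 - Λxy * (a * d)
        = Λxy * α⁻¹ / 2 * (d - α * a) ^ 2 := by field_simp; ring
    nlinarith [mul_nonneg (mul_nonneg hΛxy hαi0) (sq_nonneg (d - α * a)), e]
  nlinarith [mul_nonneg hΛxx (sq_nonneg (a - c)), mul_nonneg hΛyy (sq_nonneg (b - d)),
    key1, key2]

/-- If `h : 𝒳 × 𝒴 → ℝ` is differentiable, convex-concave, with blockwise smoothness constants
`(Λxx, Λxy, Λyy)`, and `α > 0`, then the gradient operator `Φ^h = (∇_x h, −∇_y h)` is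
1-relatively Lipschitz with respect to
`r^h_α(x, y) = ((Λxx + αΛxy)/2)‖x‖² + ((Λyy + α⁻¹Λxy)/2)‖y‖²`. -/
theorem stmt_2 {X Y : Type*} [NormedAddCommGroup X] [InnerProductSpace ℝ X]
    [FiniteDimensional ℝ X] [NormedAddCommGroup Y] [InnerProductSpace ℝ Y]
    [FiniteDimensional ℝ Y]
    (h : X × Y → ℝ) (hx : X × Y → X) (hy : X × Y → Y)
    (hcc₁ : ∀ y : Y, ConvexOn ℝ Set.univ (fun x => h (x, y)))
    (hcc₂ : ∀ x : X, ConcaveOn ℝ Set.univ (fun y => h (x, y)))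
    (hdx : ∀ p : X × Y, HasGradientAt (fun x => h (x, p.2)) (hx p) p.1)
    (hdy : ∀ p : X × Y, HasGradientAt (fun y => h (p.1, y)) (hy p) p.2)
    (Λxx Λxy Λyy : ℝ) (hΛxx : 0 ≤ Λxx) (hΛxy : 0 ≤ Λxy) (hΛyy : 0 ≤ Λyy)
    (hlip₁ : ∀ u v : X × Y, ‖hx u - hx v‖ ≤ Λxx * ‖u.1 - v.1‖ + Λxy * ‖u.2 - v.2‖)
    (hlip₂ : ∀ u v : X × Y, ‖hy u - hy v‖ ≤ Λxy * ‖u.1 - v.1‖ + Λyy * ‖u.2 - v.2‖)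
    (α : ℝ) (hα : 0 < α)
    (w v z : X × Y) :
    ⟪hx w - hx z, w.1 - v.1⟫ - ⟪hy w - hy z, w.2 - v.2⟫ ≤
      ((Λxx + α * Λxy) / 2 * ‖w.1 - z.1‖ ^ 2 + (Λyy + α⁻¹ * Λxy) / 2 * ‖w.2 - z.2‖ ^ 2)
        + ((Λxx + α * Λxy) / 2 * ‖v.1 - w.1‖ ^ 2
            + (Λyy + α⁻¹ * Λxy) / 2 * ‖v.2 - w.2‖ ^ 2) := by
  have hc : ‖v.1 - w.1‖ = ‖w.1 - v.1‖ := norm_sub_rev _ _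
  have hd : ‖v.2 - w.2‖ = ‖w.2 - v.2‖ := norm_sub_rev _ _
  rw [hc, hd]
  have h1 : ⟪hx w - hx z, w.1 - v.1⟫ ≤ (Λxx * ‖w.1 - z.1‖ + Λxy * ‖w.2 - z.2‖) * ‖w.1 - v.1‖ :=
    (real_inner_le_norm _ _).trans (mul_le_mul_of_nonneg_right (hlip₁ w z) (norm_nonneg _))
  have h2 : -⟪hy w - hy z, w.2 - v.2⟫ ≤ (Λxy * ‖w.1 - z.1‖ + Λyy * ‖w.2 - z.2‖) * ‖w.2 - v.2‖ := by
    have := (neg_le_abs _).trans (abs_real_inner_le_norm (hy w - hy z) (w.2 - v.2))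
    exact this.trans (mul_le_mul_of_nonneg_right (hlip₂ w z) (norm_nonneg _))
  have := stmt_2_aux Λxx Λxy Λyy α ‖w.1 - z.1‖ ‖w.2 - z.2‖ ‖w.1 - v.1‖ ‖w.2 - v.2‖
    hΛxx hΛxy hΛyy hα
  linarith
end

section
/- Suppose (x⋆, y⋆, a⋆, b⋆) ∈ 𝒳 × 𝒴 × 𝒳 × 𝒴 is a saddle point of the primal-dual objective F_pd, i.e. F_pd(x⋆, y, a, b⋆) ≤ F_pd(x⋆, y⋆, a⋆, b⋆) ≤ F_pd(x, y⋆, a⋆, b) holds in the extended reals for all x, a ∈ 𝒳 and y, b ∈ 𝒴. Then (x⋆, y⋆) is a saddle point of F: F(x⋆, y) ≤ F(x⋆, y⋆) ≤ F(x, y⋆) for all x ∈ 𝒳, y ∈ 𝒴. -/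
/-!
Fenchel–Young gives `⟪a, x⟫ - f*(a) ≤ f(x)`, with equality at `a = ∇f(x)` because a convex
differentiable function lies above its tangent planes. Testing the two saddle inequalities of
`F_pd` against `a = ∇f(x⋆)` and `b = ∇g(y⋆)` first shows that `f*(a⋆)` and `g*(b⋆)` are finite;
with Fenchel–Young at `a⋆` and `b⋆` they then collapse to the two saddle inequalities of `F`.
-/

open scoped RealInnerProductSpace

/-- Convex conjugate `f*(a) = sup_x (⟪a, x⟫ − f(x))`, valued in the extended reals. -/
noncomputable def conj {X : Type*} [NormedAddCommGroup X] [InnerProductSpace ℝ X]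
    (f : X → ℝ) (a : X) : EReal :=
  ⨆ x : X, ((⟪a, x⟫ - f x : ℝ) : EReal)

/-- The primal-dual objective
`F_pd(x, y, a, b) = ⟪a, x⟫ − ⟪b, y⟫ + (μˣ/2)‖x‖² − (μʸ/2)‖y‖² + h(x, y) − f*(a) + g*(b)`,
valued in the extended reals. -/
noncomputable def Fpd {X Y : Type*} [NormedAddCommGroup X] [InnerProductSpace ℝ X]
    [NormedAddCommGroup Y] [InnerProductSpace ℝ Y]
    (f : X → ℝ) (g : Y → ℝ) (h : X × Y → ℝ) (μx μy : ℝ)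
    (x : X) (y : Y) (a : X) (b : Y) : EReal :=
  ((⟪a, x⟫ - ⟪b, y⟫ + μx / 2 * ‖x‖ ^ 2 - μy / 2 * ‖y‖ ^ 2 + h (x, y) : ℝ) : EReal)
    - conj f a + conj g b

lemma ConvexOn.add_apply_sub_le_of_hasFDerivAt {E : Type*} [NormedAddCommGroup E]
    [NormedSpace ℝ E] {s : Set E} {f : E → ℝ} {f' : E →L[ℝ] ℝ} {x y : E}
    (hf : ConvexOn ℝ s f) (hx : x ∈ s) (hy : y ∈ s) (hf' : HasFDerivAt f f' x) :
    f x + f' (y - x) ≤ f y := by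
  set ℓ : ℝ →ᵃ[ℝ] E := AffineMap.lineMap x y
  have hℓ0 : ℓ 0 = x := AffineMap.lineMap_apply_zero x y
  have hℓ1 : ℓ 1 = y := AffineMap.lineMap_apply_one x y
  have hline : ConvexOn ℝ (ℓ ⁻¹' s) (f ∘ ℓ) := hf.comp_affineMap ℓ
  have hderiv : HasDerivAt (f ∘ ℓ) (f' (y - x)) 0 :=
    (hℓ0 ▸ hf').comp_hasDerivAt (0 : ℝ) AffineMap.hasDerivAt_lineMap
  have hslope := hline.le_slope_of_hasDerivAt (hℓ0 ▸ hx : ℓ 0 ∈ s) (hℓ1 ▸ hy : ℓ 1 ∈ s)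
    zero_lt_one hderiv
  simp only [slope_def_field, Function.comp_apply, hℓ0, hℓ1, sub_zero, div_one] at hslope
  linarith

lemma ConvexOn.add_inner_gradient_sub_le {E : Type*} [NormedAddCommGroup E]
    [InnerProductSpace ℝ E] [CompleteSpace E] {f : E → ℝ} {x : E}
    (hf : ConvexOn ℝ Set.univ f) (hfx : DifferentiableAt ℝ f x) (y : E) :
    f x + ⟪gradient f x, y - x⟫ ≤ f y :=
  hf.add_apply_sub_le_of_hasFDerivAt (Set.mem_univ x) (Set.mem_univ y)
    hfx.hasGradientAt.hasFDerivAt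

section Conjugate

variable {X : Type*} [NormedAddCommGroup X] [InnerProductSpace ℝ X]

lemma inner_sub_le_conj (f : X → ℝ) (a x : X) : ((⟪a, x⟫ - f x : ℝ) : EReal) ≤ conj f a :=
  le_iSup (fun x => ((⟪a, x⟫ - f x : ℝ) : EReal)) x

lemma inner_sub_le_of_conj_eq {f : X → ℝ} {a : X} {r : ℝ} (hr : conj f a = r) (x : X) :
    ⟪a, x⟫ - f x ≤ r :=
  EReal.coe_le_coe_iff.mp (hr ▸ inner_sub_le_conj f a x)

lemma conj_ne_bot (f : X → ℝ) (a : X) : conj f a ≠ ⊥ :=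
  ne_bot_of_le_ne_bot (EReal.coe_ne_bot _) (inner_sub_le_conj f a 0)

lemma exists_conj_eq_coe {f : X → ℝ} {a : X} (hf : conj f a ≠ ⊤) : ∃ r : ℝ, conj f a = r :=
  ⟨_, (EReal.coe_toReal hf (conj_ne_bot f a)).symm⟩

lemma conj_gradient [CompleteSpace X] {f : X → ℝ} {x : X} (hf : ConvexOn ℝ Set.univ f)
    (hfx : DifferentiableAt ℝ f x) :
    conj f (gradient f x) = ((⟪gradient f x, x⟫ - f x : ℝ) : EReal) := by
  refine le_antisymm (iSup_le fun y => EReal.coe_le_coe_iff.mpr ?_) (inner_sub_le_conj f _ x)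
  have := hf.add_inner_gradient_sub_le hfx y
  rw [inner_sub_right] at this
  linarith

end Conjugate

section PrimalDual

variable {X Y : Type*} [NormedAddCommGroup X] [InnerProductSpace ℝ X]
  [NormedAddCommGroup Y] [InnerProductSpace ℝ Y]
  {f : X → ℝ} {g : Y → ℝ} {h : X × Y → ℝ} {μx μy : ℝ} {x : X} {y : Y} {a : X} {b : Y}

lemma Fpd_eq_bot_of_conj_eq_top (hf : conj f a = ⊤) : Fpd f g h μx μy x y a b = ⊥ := by
  rw [Fpd, hf, EReal.sub_top, EReal.bot_add]

lemma Fpd_eq_coe_add {r : ℝ} (hf : conj f a = r) :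
    Fpd f g h μx μy x y a b =
      ((⟪a, x⟫ - ⟪b, y⟫ + μx / 2 * ‖x‖ ^ 2 - μy / 2 * ‖y‖ ^ 2 + h (x, y) - r : ℝ) : EReal)
        + conj g b := by
  rw [Fpd, hf, EReal.coe_sub]

lemma Fpd_eq_coe {r s : ℝ} (hf : conj f a = r) (hg : conj g b = s) :
    Fpd f g h μx μy x y a b =
      ((⟪a, x⟫ - ⟪b, y⟫ + μx / 2 * ‖x‖ ^ 2 - μy / 2 * ‖y‖ ^ 2 + h (x, y) - r + s : ℝ) :
        EReal) := by
  rw [Fpd_eq_coe_add hf, hg, EReal.coe_add]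

end PrimalDual

theorem stmt_3_general {X Y : Type*} [NormedAddCommGroup X] [InnerProductSpace ℝ X]
    [FiniteDimensional ℝ X] [NormedAddCommGroup Y] [InnerProductSpace ℝ Y]
    [FiniteDimensional ℝ Y]
    (f : X → ℝ) (g : Y → ℝ) (h : X × Y → ℝ) (μx μy : ℝ)
    (hfconv : ConvexOn ℝ Set.univ f) (hgconv : ConvexOn ℝ Set.univ g)
    (hfd : Differentiable ℝ f) (hgd : Differentiable ℝ g)
    (xs : X) (ys : Y) (as' : X) (bs : Y)
    (hsaddle₁ : ∀ (y : Y) (a : X),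
      Fpd f g h μx μy xs y a bs ≤ Fpd f g h μx μy xs ys as' bs)
    (hsaddle₂ : ∀ (x : X) (b : Y),
      Fpd f g h μx μy xs ys as' bs ≤ Fpd f g h μx μy x ys as' b) :
    (∀ y : Y,
        f xs + h (xs, y) - g y + μx / 2 * ‖xs‖ ^ 2 - μy / 2 * ‖y‖ ^ 2 ≤
          f xs + h (xs, ys) - g ys + μx / 2 * ‖xs‖ ^ 2 - μy / 2 * ‖ys‖ ^ 2) ∧
      (∀ x : X,
        f xs + h (xs, ys) - g ys + μx / 2 * ‖xs‖ ^ 2 - μy / 2 * ‖ys‖ ^ 2 ≤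
          f x + h (x, ys) - g ys + μx / 2 * ‖x‖ ^ 2 - μy / 2 * ‖ys‖ ^ 2) := by
  have hf := conj_gradient hfconv (hfd xs)
  have hg := conj_gradient hgconv (hgd ys)
  have hfs_ne_top : conj f as' ≠ ⊤ := fun htop => by
    have := hsaddle₁ ys (gradient f xs)
    rw [Fpd_eq_coe_add hf, Fpd_eq_bot_of_conj_eq_top htop, le_bot_iff,
      EReal.add_eq_bot_iff] at this
    exact this.elim (EReal.coe_ne_bot _) (conj_ne_bot g bs)
  obtain ⟨r, hr⟩ := exists_conj_eq_coe hfs_ne_top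
  have hgs_ne_top : conj g bs ≠ ⊤ := fun htop => by
    have := hsaddle₂ xs (gradient g ys)
    rw [Fpd_eq_coe_add hr, Fpd_eq_coe hr hg, htop, EReal.coe_add_top, top_le_iff] at this
    exact EReal.coe_ne_top _ this
  obtain ⟨s, hs⟩ := exists_conj_eq_coe hgs_ne_top
  have h₁ := fun y => hsaddle₁ y (gradient f xs)
  have h₂ := fun x => hsaddle₂ x (gradient g ys)
  simp only [Fpd_eq_coe hf hs, Fpd_eq_coe hr hs, Fpd_eq_coe hr hg, EReal.coe_le_coe_iff] at h₁ h₂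
  have hfenchel_f := inner_sub_le_of_conj_eq hr
  have hfenchel_g := inner_sub_le_of_conj_eq hs
  exact ⟨fun y => by linarith [h₁ y, hfenchel_g y, hfenchel_f xs, h₂ xs],
    fun x => by linarith [h₁ ys, hfenchel_g ys, h₂ x, hfenchel_f x]⟩

/-- If `(x⋆, y⋆, a⋆, b⋆)` is a saddle point of the primal-dual objective `F_pd`, then
`(x⋆, y⋆)` is a saddle point of
`F(x, y) = f(x) + h(x, y) − g(y) + (μˣ/2)‖x‖² − (μʸ/2)‖y‖²`. -/
theorem stmt_3 {X Y : Type*} [NormedAddCommGroup X] [InnerProductSpace ℝ X]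
    [FiniteDimensional ℝ X] [NormedAddCommGroup Y] [InnerProductSpace ℝ Y]
    [FiniteDimensional ℝ Y]
    (f : X → ℝ) (g : Y → ℝ) (h : X × Y → ℝ) (μx μy Lx Ly : ℝ)
    (hμx : 0 < μx) (hμy : 0 < μy)
    (hfconv : ConvexOn ℝ Set.univ f) (hgconv : ConvexOn ℝ Set.univ g)
    (hfd : Differentiable ℝ f) (hgd : Differentiable ℝ g) (hhd : Differentiable ℝ h)
    (hfsmooth : ∀ a b : X, ‖gradient f a - gradient f b‖ ≤ Lx * ‖a - b‖)
    (hgsmooth : ∀ a b : Y, ‖gradient g a - gradient g b‖ ≤ Ly * ‖a - b‖)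
    (hcc₁ : ∀ y : Y, ConvexOn ℝ Set.univ (fun x => h (x, y)))
    (hcc₂ : ∀ x : X, ConcaveOn ℝ Set.univ (fun y => h (x, y)))
    (xs : X) (ys : Y) (as' : X) (bs : Y)
    (hsaddle₁ : ∀ (y : Y) (a : X),
      Fpd f g h μx μy xs y a bs ≤ Fpd f g h μx μy xs ys as' bs)
    (hsaddle₂ : ∀ (x : X) (b : Y),
      Fpd f g h μx μy xs ys as' bs ≤ Fpd f g h μx μy x ys as' b) :
    (∀ y : Y,
        f xs + h (xs, y) - g y + μx / 2 * ‖xs‖ ^ 2 - μy / 2 * ‖y‖ ^ 2 ≤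
          f xs + h (xs, ys) - g ys + μx / 2 * ‖xs‖ ^ 2 - μy / 2 * ‖ys‖ ^ 2) ∧
      (∀ x : X,
        f xs + h (xs, ys) - g ys + μx / 2 * ‖xs‖ ^ 2 - μy / 2 * ‖ys‖ ^ 2 ≤
          f x + h (x, ys) - g ys + μx / 2 * ‖x‖ ^ 2 - μy / 2 * ‖ys‖ ^ 2) :=
  stmt_3_general f g h μx μy hfconv hgconv hfd hgd xs ys as' bs hsaddle₁ hsaddle₂
end

section
/- The primal-dual gradient operator of the separable minimax problem is 1-strongly monotone with respect to its regularizer: for all tuples z = (z^x, z^y, z^p, z^q) and z' = (z'^x, z'^y, z'^p, z'^q) in 𝒳 × 𝒴 × 𝒳 × 𝒴, ⟨(μ^x z^x + ∇f(z^p) + ∇_x h(z^x, z^y)) − (μ^x z'^x + ∇f(z'^p) + ∇_x h(z'^x, z'^y)), z^x − z'^x⟩ + ⟨(μ^y z^y + ∇g(z^q) − ∇_y h(z^x, z^y)) − (μ^y z'^y + ∇g(z'^q) − ∇_y h(z'^x, z'^y)), z^y − z'^y⟩ + ⟨(z^p − z^x) − (z'^p − z'^x), ∇f(z^p) − ∇f(z'^p)⟩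 + ⟨(z^q − z^y) − (z'^q − z'^y), ∇g(z^q) − ∇g(z'^q)⟩ ≥ μ^x‖z^x − z'^x‖² + μ^y‖z^y − z'^y‖² + ⟨z^p − z'^p, ∇f(z^p) − ∇f(z'^p)⟩ + ⟨z^q − z'^q, ∇g(z^q) − ∇g(z'^q)⟩. -/
open scoped RealInnerProductSpace

/-! Expanding the inner products, the terms carrying `μx`, `μy`, `f'` and `g'` cancel against the
right-hand side, and what remains is
`⟪∇ₓh(z) - ∇ₓh(z'), zx - zx'⟫ - ⟪∇ᵧh(z) - ∇ᵧh(z'), zy - zy'⟫ ≥ 0`: the monotonicity of the saddle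
gradient `(∇ₓh, -∇ᵧh)` of a convex-concave function. It follows by adding the four first-order
inequalities of `h` in `x` and in `y` at the points `(zx, zy)` and `(zx', zy')`. -/

section Gradient

variable {X : Type*} [NormedAddCommGroup X] [InnerProductSpace ℝ X] [CompleteSpace X]
  {s : Set X} {φ : X → ℝ} {G x y : X}

theorem HasGradientAt.neg (hG : HasGradientAt φ G x) : HasGradientAt (-φ) (-G) x := by
  rw [hasGradientAt_iff_hasFDerivAt, map_neg] at *
  exact hG.neg

theorem HasGradientAt.hasDerivAt_lineMap (hG : HasGradientAt φ G x) :
    HasDerivAt (φ ∘ AffineMap.lineMap (k := ℝ) x y) ⟪G, y - x⟫ 0 := by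
  have hG' : HasFDerivAt φ (InnerProductSpace.toDual ℝ X G) (AffineMap.lineMap x y (0 : ℝ)) := by
    simpa using hG.hasFDerivAt
  simpa using hG'.comp_hasDerivAt (0 : ℝ) AffineMap.hasDerivAt_lineMap

theorem ConvexOn.add_inner_le_of_hasGradientAt (hφ : ConvexOn ℝ s φ) (hx : x ∈ s) (hy : y ∈ s)
    (hG : HasGradientAt φ G x) : φ x + ⟪G, y - x⟫ ≤ φ y := by
  have hline : ConvexOn ℝ (Set.Icc (0 : ℝ) 1) (φ ∘ AffineMap.lineMap x y) :=
    (hφ.comp_affineMap _).subset (fun t ht => hφ.1.lineMap_mem hx hy ht) (convex_Icc 0 1)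
  have := hline.le_slope_of_hasDerivAt (by simp) (by simp) zero_lt_one
    (HasGradientAt.hasDerivAt_lineMap hG)
  simp only [slope_def_field, Function.comp_apply, AffineMap.lineMap_apply_one,
    AffineMap.lineMap_apply_zero, sub_zero, div_one] at this
  linarith

theorem ConcaveOn.le_add_inner_of_hasGradientAt (hφ : ConcaveOn ℝ s φ) (hx : x ∈ s) (hy : y ∈ s)
    (hG : HasGradientAt φ G x) : φ y ≤ φ x + ⟪G, y - x⟫ := by
  have := hφ.neg.add_inner_le_of_hasGradientAt hx hy (HasGradientAt.neg hG)
  simp only [Pi.neg_apply, inner_neg_left] at this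
  linarith

end Gradient

theorem inner_gradient_snd_sub_le_inner_gradient_fst_sub {X Y : Type*}
    [NormedAddCommGroup X] [InnerProductSpace ℝ X] [CompleteSpace X]
    [NormedAddCommGroup Y] [InnerProductSpace ℝ Y] [CompleteSpace Y]
    {h : X × Y → ℝ} {hx : X × Y → X} {hy : X × Y → Y}
    (hconv : ∀ y : Y, ConvexOn ℝ Set.univ (fun x => h (x, y)))
    (hconc : ∀ x : X, ConcaveOn ℝ Set.univ (fun y => h (x, y)))
    (hdx : ∀ p : X × Y, HasGradientAt (fun x => h (x, p.2)) (hx p) p.1)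
    (hdy : ∀ p : X × Y, HasGradientAt (fun y => h (p.1, y)) (hy p) p.2)
    (x x' : X) (y y' : Y) :
    ⟪hy (x, y) - hy (x', y'), y - y'⟫ ≤ ⟪hx (x, y) - hx (x', y'), x - x'⟫ := by
  have h₁ := (hconv y).add_inner_le_of_hasGradientAt trivial trivial (hdx (x, y)) (y := x')
  have h₂ := (hconv y').add_inner_le_of_hasGradientAt trivial trivial (hdx (x', y')) (y := x)
  have h₃ := (hconc x).le_add_inner_of_hasGradientAt trivial trivial (hdy (x, y)) (y := y')
  have h₄ := (hconc x').le_add_inner_of_hasGradientAt trivial trivial (hdy (x', y')) (y := y)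
  rw [← neg_sub x x', inner_neg_right] at h₁
  rw [← neg_sub y y', inner_neg_right] at h₃
  rw [inner_sub_left, inner_sub_left]
  linarith

theorem stmt_4_general {X Y : Type*} [NormedAddCommGroup X] [InnerProductSpace ℝ X]
    [FiniteDimensional ℝ X] [NormedAddCommGroup Y] [InnerProductSpace ℝ Y]
    [FiniteDimensional ℝ Y]
    (f' : X → X) (g' : Y → Y)
    (h : X × Y → ℝ) (hx : X × Y → X) (hy : X × Y → Y)
    (μx μy : ℝ)
    (hcc₁ : ∀ y : Y, ConvexOn ℝ Set.univ (fun x => h (x, y)))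
    (hcc₂ : ∀ x : X, ConcaveOn ℝ Set.univ (fun y => h (x, y)))
    (hdx : ∀ p : X × Y, HasGradientAt (fun x => h (x, p.2)) (hx p) p.1)
    (hdy : ∀ p : X × Y, HasGradientAt (fun y => h (p.1, y)) (hy p) p.2)
    (zx zx' zp zp' : X) (zy zy' zq zq' : Y) :
    ⟪(μx • zx + f' zp + hx (zx, zy)) - (μx • zx' + f' zp' + hx (zx', zy')), zx - zx'⟫
      + ⟪(μy • zy + g' zq - hy (zx, zy)) - (μy • zy' + g' zq' - hy (zx', zy')), zy - zy'⟫
      + ⟪(zp - zx) - (zp' - zx'), f' zp - f' zp'⟫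
      + ⟪(zq - zy) - (zq' - zy'), g' zq - g' zq'⟫
    ≥ μx * ‖zx - zx'‖ ^ 2 + μy * ‖zy - zy'‖ ^ 2
        + ⟪zp - zp', f' zp - f' zp'⟫ + ⟪zq - zq', g' zq - g' zq'⟫ := by
  have hsaddle := inner_gradient_snd_sub_le_inner_gradient_fst_sub hcc₁ hcc₂ hdx hdy zx zx' zy zy'
  rw [show (μx • zx + f' zp + hx (zx, zy)) - (μx • zx' + f' zp' + hx (zx', zy'))
      = μx • (zx - zx') + (f' zp - f' zp') + (hx (zx, zy) - hx (zx', zy')) by module,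
    show (μy • zy + g' zq - hy (zx, zy)) - (μy • zy' + g' zq' - hy (zx', zy'))
      = μy • (zy - zy') + (g' zq - g' zq') - (hy (zx, zy) - hy (zx', zy')) by module,
    show (zp - zx) - (zp' - zx') = (zp - zp') - (zx - zx') by abel,
    show (zq - zy) - (zq' - zy') = (zq - zq') - (zy - zy') by abel]
  set dx := zx - zx'
  set dy := zy - zy'
  set df := f' zp - f' zp'
  set dg := g' zq - g' zq'
  set dhx := hx (zx, zy) - hx (zx', zy')
  set dhy := hy (zx, zy) - hy (zx', zy')
  simp only [inner_add_left, inner_sub_left, real_inner_smul_left, real_inner_self_eq_norm_sq]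
  linarith [real_inner_comm dx df, real_inner_comm dy dg]

/-- The primal-dual gradient operator of the separable minimax problem (in the primal
parametrization, where a tuple `(zx, zy, zp, zq)` encodes the primal-dual point
`(zx, zy, ∇f(zp), ∇g(zq))`) is 1-strongly monotone with respect to its regularizer. -/
theorem stmt_4 {X Y : Type*} [NormedAddCommGroup X] [InnerProductSpace ℝ X]
    [FiniteDimensional ℝ X] [NormedAddCommGroup Y] [InnerProductSpace ℝ Y]
    [FiniteDimensional ℝ Y]
    (f : X → ℝ) (f' : X → X) (g : Y → ℝ) (g' : Y → Y)
    (h : X × Y → ℝ) (hx : X × Y → X) (hy : X × Y → Y)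
    (μx μy : ℝ) (hμx : 0 < μx) (hμy : 0 < μy)
    (hfconv : ConvexOn ℝ Set.univ f) (hgconv : ConvexOn ℝ Set.univ g)
    (hfd : ∀ x, HasGradientAt f (f' x) x) (hgd : ∀ y, HasGradientAt g (g' y) y)
    (hcc₁ : ∀ y : Y, ConvexOn ℝ Set.univ (fun x => h (x, y)))
    (hcc₂ : ∀ x : X, ConcaveOn ℝ Set.univ (fun y => h (x, y)))
    (hdx : ∀ p : X × Y, HasGradientAt (fun x => h (x, p.2)) (hx p) p.1)
    (hdy : ∀ p : X × Y, HasGradientAt (fun y => h (p.1, y)) (hy p) p.2)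
    (zx zx' zp zp' : X) (zy zy' zq zq' : Y) :
    ⟪(μx • zx + f' zp + hx (zx, zy)) - (μx • zx' + f' zp' + hx (zx', zy')), zx - zx'⟫
      + ⟪(μy • zy + g' zq - hy (zx, zy)) - (μy • zy' + g' zq' - hy (zx', zy')), zy - zy'⟫
      + ⟪(zp - zx) - (zp' - zx'), f' zp - f' zp'⟫
      + ⟪(zq - zy) - (zq' - zy'), g' zq - g' zq'⟫
    ≥ μx * ‖zx - zx'‖ ^ 2 + μy * ‖zy - zy'‖ ^ 2
        + ⟪zp - zp', f' zp - f' zp'⟫ + ⟪zq - zq', g' zq - g' zq'⟫ :=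
  stmt_4_general f' g' h hx hy μx μy hcc₁ hcc₂ hdx hdy zx zx' zp zp' zy zy' zq zq'
end

section
/- Unbiasedness of the randomized finite-sum gradient estimator: let p₁, …, pₙ > 0 with ∑_j p_j = 1. Fix w encoded by (x, u₁, …, uₙ), a common point x_a ∈ 𝒳, and points u'₁, …, u'ₙ ∈ 𝒳, and for each j let w_aux(j) be encoded by (x_a, u₁, …, u_{j−1}, u'_j, u_{j+1}, …, uₙ). Define the sampled operator at w_aux(j) to have 𝒳-block G^x_j := (1/n)∑_i ∇f_i(u_i) + (1/(n p_j))(∇f_j(u'_j) − ∇f_j(u_j)) + μ x_a, j-th dual block (1/(n p_j))(u'_j − x_a), and all other dual blocks zero. Let w̄ be encoded by (x_a, u'₁, …, u'ₙ). Then for every u^x ∈ 𝒳 and a₁, …, aₙ ∈ 𝒳: ∑_{j=1}^n p_j [⟨G^x_j, x_a − u^x⟩ + ⟨(1/(n p_j))(u'_j − x_a), ∇f_j(u'_j) − a_j⟩] = ⟨(1/n)∑_i ∇f_i(u'_i) + μ x_a, x_a − u^x⟩ + ∑_{i=1}^n (1/n)⟨u'_i − x_a, ∇f_i(u'_i) −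 a_i⟩. -/
open scoped RealInnerProductSpace

/-- Unbiasedness of the randomized finite-sum gradient estimator: the expectation over `j ∼ p`
of the sampled-operator pairing at `w_aux(j)` equals the full-operator pairing at the aggregate
point `w̄`. -/
theorem stmt_12 {X : Type*} [NormedAddCommGroup X] [InnerProductSpace ℝ X]
    [FiniteDimensional ℝ X]
    (n : ℕ) (hn : 1 ≤ n) (μ : ℝ) (hμ : 0 < μ)
    (f : Fin n → X → ℝ) (f' : Fin n → X → X)
    (hconv : ∀ i, ConvexOn ℝ Set.univ (f i))
    (hdiff : ∀ i x, HasGradientAt (f i) (f' i x) x)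
    (p : Fin n → ℝ) (hp : ∀ j, 0 < p j) (hpsum : ∑ j, p j = 1)
    -- base point `w` encoded by `(x, u₁, …, uₙ)`, aux points with common 𝒳-coordinate `xa`
    -- and `j`-th dual representative `u' j`
    (x xa : X) (u u' : Fin n → X) :
    ∀ (ux : X) (a : Fin n → X),
      ∑ j, p j *
          (⟪(1 / (n : ℝ)) • ∑ i, f' i (u i)
              + (1 / ((n : ℝ) * p j)) • (f' j (u' j) - f' j (u j)) + μ • xa, xa - ux⟫
            + ⟪(1 / ((n : ℝ) * p j)) • (u' j - xa), f' j (u' j) - a j⟫)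
        = ⟪(1 / (n : ℝ)) • ∑ i, f' i (u' i) + μ • xa, xa - ux⟫
            + ∑ i, (1 / (n : ℝ)) * ⟪u' i - xa, f' i (u' i) - a i⟫ := by
  intro ux a
  have hn0 : (n : ℝ) ≠ 0 := Nat.cast_ne_zero.mpr (by omega)
  have key : ∀ j : Fin n, p j *
      (⟪(1 / (n : ℝ)) • ∑ i, f' i (u i)
          + (1 / ((n : ℝ) * p j)) • (f' j (u' j) - f' j (u j)) + μ • xa, xa - ux⟫
        + ⟪(1 / ((n : ℝ) * p j)) • (u' j - xa), f' j (u' j) - a j⟫)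
      = p j * ((1 / (n : ℝ)) * ⟪∑ i, f' i (u i), xa - ux⟫ + μ * ⟪xa, xa - ux⟫)
        + (1 / (n : ℝ)) * (⟪f' j (u' j), xa - ux⟫ - ⟪f' j (u j), xa - ux⟫)
        + (1 / (n : ℝ)) * ⟪u' j - xa, f' j (u' j) - a j⟫ := by
    intro j
    have hpj : p j ≠ 0 := (hp j).ne'
    rw [inner_add_left, inner_add_left, real_inner_smul_left, real_inner_smul_left,
      real_inner_smul_left, real_inner_smul_left, inner_sub_left]
    field_simp
    ring
  rw [Finset.sum_congr rfl fun j _ => key j, Finset.sum_add_distrib, Finset.sum_add_distrib,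
    ← Finset.sum_mul, hpsum, inner_add_left, real_inner_smul_left]
  simp only [real_inner_smul_left, sum_inner, Finset.mul_sum, mul_sub, one_mul, Finset.sum_sub_distrib]
  ring
end

section
/- The proximally regularized minimax-finite-sum primal-dual operator is (1+γ)-strongly monotone with respect to its regularizer: for any anchor (x̄, ȳ, ū₁, …, ūₙ, v̄₁, …, v̄ₙ) and any γ ≥ 0, for all tuples z = (x, y, u₁, …, uₙ, v₁, …, vₙ) and z' = (x', y', u'₁, …, u'ₙ, v'₁, …, v'ₙ) in 𝒳 × 𝒴 × 𝒳ⁿ × 𝒴ⁿ: ⟨((1+γ)μ^x x + (1/n)∑_i ∇_x h_i(x, y) + (1/n)∑_i ∇f_i(u_i)) − ((1+γ)μ^x x' + (1/n)∑_i ∇_x h_i(x', y') + (1/n)∑_i ∇f_i(u'_i)), x − x'⟩ + ⟨((1+γ)μ^y y − (1/n)∑_i ∇_y h_i(x, y) + (1/n)∑_i ∇g_i(v_i)) − ((1+γ)μ^y y' − (1/n)∑_i ∇_y h_i(x', y') + (1/n)∑_i ∇g_i(v'_i)), y − y'⟩ + (1/n)∑_i ⟨((1+γ)u_i − x) − ((1+γ)u'_i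 − x'), ∇f_i(u_i) − ∇f_i(u'_i)⟩ + (1/n)∑_i ⟨((1+γ)v_i − y) − ((1+γ)v'_i − y'), ∇g_i(v_i) − ∇g_i(v'_i)⟩ ≥ (1+γ)·[μ^x‖x − x'‖² + μ^y‖y − y'‖² + (1/n)∑_i ⟨u_i − u'_i, ∇f_i(u_i) − ∇f_i(u'_i)⟩ + (1/n)∑_i ⟨v_i − v'_i, ∇g_i(v_i) − ∇g_i(v'_i)⟩]. -/
/-!
Expanding both sides, the cross terms `⟪x - x', ∇f_i(u_i) - ∇f_i(u'_i)⟫` coming from the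
`x`-block cancel against those of the `u_i`-blocks (and likewise for `y` and the `v_i`), and the
regularizer terms match exactly. What remains is `1/n` times the sum of the monotonicity gaps
`⟪x - x', ∇ₓh_i(x, y) - ∇ₓh_i(x', y')⟫ - ⟪y - y', ∇_y h_i(x, y) - ∇_y h_i(x', y')⟫`, each of which
is nonnegative: add the four gradient inequalities for the convex functions `h_i(·, y)`,
`h_i(·, y')` and the concave functions `h_i(x, ·)`, `h_i(x', ·)`.
-/

open scoped RealInnerProductSpace

section Gradient

variable {E : Type*} [NormedAddCommGroup E] [InnerProductSpace ℝ E]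

theorem slope_comp_lineMap_zero_one (f : E → ℝ) (a b : E) :
    slope (f ∘ (AffineMap.lineMap a b : ℝ →ᵃ[ℝ] E)) 0 1 = f b - f a := by
  simp [slope]

variable [CompleteSpace E] {f : E → ℝ} {g a : E}

theorem HasGradientAt.hasDerivAt_comp_lineMap (hd : HasGradientAt f g a) (b : E) :
    HasDerivAt (f ∘ (AffineMap.lineMap a b : ℝ →ᵃ[ℝ] E)) ⟪g, b - a⟫ 0 := by
  rw [hasGradientAt_iff_hasFDerivAt, ← AffineMap.lineMap_apply_zero (k := ℝ) a b] at hd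
  simpa using hd.comp_hasDerivAt (0 : ℝ) AffineMap.hasDerivAt_lineMap

theorem ConvexOn.add_inner_gradient_le (hc : ConvexOn ℝ Set.univ f) (hd : HasGradientAt f g a)
    (b : E) : f a + ⟪g, b - a⟫ ≤ f b := by
  have hline := (hc.comp_affineMap (AffineMap.lineMap a b)).le_slope_of_hasDerivAt
    (Set.mem_univ 0) (Set.mem_univ 1) one_pos (hd.hasDerivAt_comp_lineMap b)
  rw [slope_comp_lineMap_zero_one] at hline
  linarith

theorem ConcaveOn.le_add_inner_gradient (hc : ConcaveOn ℝ Set.univ f) (hd : HasGradientAt f g a)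
    (b : E) : f b ≤ f a + ⟪g, b - a⟫ := by
  have hline := (hc.comp_affineMap (AffineMap.lineMap a b)).slope_le_of_hasDerivAt
    (Set.mem_univ 0) (Set.mem_univ 1) one_pos (hd.hasDerivAt_comp_lineMap b)
  rw [slope_comp_lineMap_zero_one] at hline
  linarith

end Gradient

theorem inner_saddle_gradient_sub_nonneg {X Y : Type*} [NormedAddCommGroup X]
    [InnerProductSpace ℝ X] [CompleteSpace X] [NormedAddCommGroup Y] [InnerProductSpace ℝ Y]
    [CompleteSpace Y] {h : X × Y → ℝ} {hx : X × Y → X} {hy : X × Y → Y}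
    (hconv : ∀ y, ConvexOn ℝ Set.univ (fun x => h (x, y)))
    (hconc : ∀ x, ConcaveOn ℝ Set.univ (fun y => h (x, y)))
    (hdx : ∀ p : X × Y, HasGradientAt (fun x => h (x, p.2)) (hx p) p.1)
    (hdy : ∀ p : X × Y, HasGradientAt (fun y => h (p.1, y)) (hy p) p.2)
    (x x' : X) (y y' : Y) :
    0 ≤ ⟪x - x', hx (x, y) - hx (x', y')⟫ - ⟪y - y', hy (x, y) - hy (x', y')⟫ := by
  have h₁ := (hconv y).add_inner_gradient_le (hdx (x, y)) x'
  have h₂ := (hconv y').add_inner_gradient_le (hdx (x', y')) x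
  have h₃ := (hconc x).le_add_inner_gradient (hdy (x, y)) y'
  have h₄ := (hconc x').le_add_inner_gradient (hdy (x', y')) y
  simp only [inner_sub_left, inner_sub_right, real_inner_comm] at h₁ h₂ h₃ h₄ ⊢
  linarith

theorem stmt_15_general {X Y : Type*} [NormedAddCommGroup X] [InnerProductSpace ℝ X]
    [FiniteDimensional ℝ X] [NormedAddCommGroup Y] [InnerProductSpace ℝ Y]
    [FiniteDimensional ℝ Y]
    (n : ℕ) (μx μy : ℝ)
    (γ : ℝ)
    (f' : Fin n → X → X)
    (g' : Fin n → Y → Y)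
    (h : Fin n → X × Y → ℝ) (hx : Fin n → X × Y → X) (hy : Fin n → X × Y → Y)
    (hcc₁ : ∀ i (y : Y), ConvexOn ℝ Set.univ (fun x => h i (x, y)))
    (hcc₂ : ∀ i (x : X), ConcaveOn ℝ Set.univ (fun y => h i (x, y)))
    (hdx : ∀ i (p : X × Y), HasGradientAt (fun x => h i (x, p.2)) (hx i p) p.1)
    (hdy : ∀ i (p : X × Y), HasGradientAt (fun y => h i (p.1, y)) (hy i p) p.2)
    -- two tuples `z = (x, y, u, v)` and `z' = (x', y', u', v')`
    (x x' : X) (y y' : Y) (u u' : Fin n → X) (v v' : Fin n → Y) :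
    ⟪(((1 + γ) * μx) • x + (1 / (n : ℝ)) • ∑ i, hx i (x, y)
          + (1 / (n : ℝ)) • ∑ i, f' i (u i))
        - (((1 + γ) * μx) • x' + (1 / (n : ℝ)) • ∑ i, hx i (x', y')
            + (1 / (n : ℝ)) • ∑ i, f' i (u' i)), x - x'⟫
      + ⟪(((1 + γ) * μy) • y - (1 / (n : ℝ)) • ∑ i, hy i (x, y)
            + (1 / (n : ℝ)) • ∑ i, g' i (v i))
          - (((1 + γ) * μy) • y' - (1 / (n : ℝ)) • ∑ i, hy i (x', y')
              + (1 / (n : ℝ)) • ∑ i, g' i (v' i)), y - y'⟫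
      + (1 / (n : ℝ)) * ∑ i,
          ⟪((1 + γ) • u i - x) - ((1 + γ) • u' i - x'), f' i (u i) - f' i (u' i)⟫
      + (1 / (n : ℝ)) * ∑ i,
          ⟪((1 + γ) • v i - y) - ((1 + γ) • v' i - y'), g' i (v i) - g' i (v' i)⟫
    ≥ (1 + γ) *
        (μx * ‖x - x'‖ ^ 2 + μy * ‖y - y'‖ ^ 2
          + (1 / (n : ℝ)) * ∑ i, ⟪u i - u' i, f' i (u i) - f' i (u' i)⟫
          + (1 / (n : ℝ)) * ∑ i, ⟪v i - v' i, g' i (v i) - g' i (v' i)⟫) := by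
  set gap : Fin n → ℝ := fun i =>
    ⟪x - x', hx i (x, y) - hx i (x', y')⟫ - ⟪y - y', hy i (x, y) - hy i (x', y')⟫
  have hgap : 0 ≤ (1 / (n : ℝ)) * ∑ i, gap i :=
    mul_nonneg (by positivity) <| Finset.sum_nonneg fun i _ =>
      inner_saddle_gradient_sub_nonneg (hcc₁ i) (hcc₂ i) (hdx i) (hdy i) x x' y y'
  rw [ge_iff_le, ← sub_nonneg]
  refine hgap.trans_eq ?_
  rw [← real_inner_self_eq_norm_sq, ← real_inner_self_eq_norm_sq]
  simp only [gap, inner_sub_left, inner_sub_right, inner_add_right,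
    real_inner_smul_left, real_inner_smul_right, inner_sum, real_inner_comm (x - x'),
    real_inner_comm (y - y'), Finset.sum_sub_distrib, ← Finset.mul_sum]
  ring

/-- The proximally regularized minimax-finite-sum primal-dual operator is `(1+γ)`-strongly
monotone with respect to its regularizer (in the primal parametrization). -/
theorem stmt_15 {X Y : Type*} [NormedAddCommGroup X] [InnerProductSpace ℝ X]
    [FiniteDimensional ℝ X] [NormedAddCommGroup Y] [InnerProductSpace ℝ Y]
    [FiniteDimensional ℝ Y]
    (n : ℕ) (hn : 1 ≤ n) (μx μy : ℝ) (hμx : 0 < μx) (hμy : 0 < μy)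
    (γ : ℝ) (hγ : 0 ≤ γ)
    (f : Fin n → X → ℝ) (f' : Fin n → X → X)
    (g : Fin n → Y → ℝ) (g' : Fin n → Y → Y)
    (h : Fin n → X × Y → ℝ) (hx : Fin n → X × Y → X) (hy : Fin n → X × Y → Y)
    (hfconv : ∀ i, ConvexOn ℝ Set.univ (f i))
    (hgconv : ∀ i, ConvexOn ℝ Set.univ (g i))
    (hfd : ∀ i x, HasGradientAt (f i) (f' i x) x)
    (hgd : ∀ i y, HasGradientAt (g i) (g' i y) y)
    (hcc₁ : ∀ i (y : Y), ConvexOn ℝ Set.univ (fun x => h i (x, y)))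
    (hcc₂ : ∀ i (x : X), ConcaveOn ℝ Set.univ (fun y => h i (x, y)))
    (hdx : ∀ i (p : X × Y), HasGradientAt (fun x => h i (x, p.2)) (hx i p) p.1)
    (hdy : ∀ i (p : X × Y), HasGradientAt (fun y => h i (p.1, y)) (hy i p) p.2)
    -- anchor point (contributes only a constant shift to the operator)
    (xbar : X) (ybar : Y) (ubar : Fin n → X) (vbar : Fin n → Y)
    -- two tuples `z = (x, y, u, v)` and `z' = (x', y', u', v')`
    (x x' : X) (y y' : Y) (u u' : Fin n → X) (v v' : Fin n → Y) :
    ⟪(((1 + γ) * μx) • x + (1 / (n : ℝ)) • ∑ i, hx i (x, y)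
          + (1 / (n : ℝ)) • ∑ i, f' i (u i))
        - (((1 + γ) * μx) • x' + (1 / (n : ℝ)) • ∑ i, hx i (x', y')
            + (1 / (n : ℝ)) • ∑ i, f' i (u' i)), x - x'⟫
      + ⟪(((1 + γ) * μy) • y - (1 / (n : ℝ)) • ∑ i, hy i (x, y)
            + (1 / (n : ℝ)) • ∑ i, g' i (v i))
          - (((1 + γ) * μy) • y' - (1 / (n : ℝ)) • ∑ i, hy i (x', y')
              + (1 / (n : ℝ)) • ∑ i, g' i (v' i)), y - y'⟫
      + (1 / (n : ℝ)) * ∑ i,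
          ⟪((1 + γ) • u i - x) - ((1 + γ) • u' i - x'), f' i (u i) - f' i (u' i)⟫
      + (1 / (n : ℝ)) * ∑ i,
          ⟪((1 + γ) • v i - y) - ((1 + γ) • v' i - y'), g' i (v i) - g' i (v' i)⟫
    ≥ (1 + γ) *
        (μx * ‖x - x'‖ ^ 2 + μy * ‖y - y'‖ ^ 2
          + (1 / (n : ℝ)) * ∑ i, ⟪u i - u' i, f' i (u i) - f' i (u' i)⟫
          + (1 / (n : ℝ)) * ∑ i, ⟪v i - v' i, g' i (v i) - g' i (v' i)⟫) :=
  stmt_15_general n μx μy γ f' g' h hx hy hcc₁ hcc₂ hdx hdy x x' y y' u u' v v'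
end

section
/- Strongly convex reduction (deterministic form): let f : 𝒳 → ℝ be differentiable and μ-strongly convex with minimizer x⋆. Let (x_k)_{k≥0} be a sequence in 𝒳 such that for every k, writing x⋆_{k+1} for the unique minimizer of x ↦ f(x) + (μ/4)V_{x_k}(x), we have V_{x_{k+1}}(x⋆_{k+1}) ≤ (1/4)·V_{x_k}(x⋆_{k+1}). Then for every k ≥ 0: V_{x_k}(x⋆) ≤ 2^{−k}·V_{x₀}(x⋆). -/
open scoped RealInnerProductSpace


lemma exists_min' {X : Type*} [NormedAddCommGroup X] [InnerProductSpace ℝ X]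
    [FiniteDimensional ℝ X]
    (f : X → ℝ) (hf : Continuous f) (m : ℝ) (hm : ∀ x', m ≤ f x')
    (a : X) (c : ℝ) (hc : 0 < c) :
    ∃ z, ∀ x', f z + c * ‖a - z‖^2 ≤ f x' + c * ‖a - x'‖^2 := by
  have hgc : Continuous (fun x' => f x' + c * ‖a - x'‖^2) := by fun_prop
  apply hgc.exists_forall_le' a
  rw [← Metric.cobounded_eq_cocompact]
  set R : ℝ := Real.sqrt (max 0 ((f a - m) / c)) with hRdef
  have hR : 0 ≤ R := Real.sqrt_nonneg _
  filter_upwards [eventually_cobounded_le_norm (‖a‖ + R)] with y hy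
  have h1 : R ≤ ‖a - y‖ := by
    have h := norm_sub_norm_le y a
    rw [← norm_sub_rev a y] at h
    linarith
  have h2 : (f a - m) / c ≤ ‖a - y‖^2 := by
    have hsq : R^2 = max 0 ((f a - m)/c) := Real.sq_sqrt (le_max_left _ _)
    nlinarith [le_max_right 0 ((f a - m)/c), norm_nonneg (a - y)]
  have h3 : f a - m ≤ c * ‖a - y‖^2 := by
    rw [div_le_iff₀ hc] at h2; linarith
  have h4 := hm y
  simp only [sub_self, norm_zero]
  nlinarith

lemma key' {X : Type*} [NormedAddCommGroup X] [InnerProductSpace ℝ X]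
    (μ : ℝ) (hμ : 0 < μ) (f : X → ℝ) (f' : X → X)
    (hsc : ∀ u u' : X, f u' - f u - ⟪f' u, u' - u⟫ ≥ μ / 2 * ‖u - u'‖ ^ 2)
    (xs : X) (hmin : ∀ x : X, f xs ≤ f x) (a z : X)
    (hz : ∀ x', f z + μ/8 * ‖a - z‖^2 ≤ f x' + μ/8 * ‖a - x'‖^2) :
    ‖a - z‖^2 + 5*‖xs - z‖^2 ≤ ‖a - xs‖^2 := by
  set v : X := xs - z with hv
  set n : ℝ := ‖v‖^2 with hn
  set i : ℝ := ⟪a - z, v⟫ with hi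
  have hn0 : 0 ≤ n := by positivity
  have h0 : ∀ t : ℝ, 0 < t → t ≤ 1 → μ/4 * i + μ/2 * n ≤ (5*μ/8) * n * t := by
    intro t ht ht1
    set w : X := z + t • v with hw
    have e1 : w - z = t • v := by rw [hw]; abel
    have e2 : xs - w = (1 - t) • v := by rw [hw, hv]; module
    have e3 : z - w = (-t) • v := by rw [hw]; module
    have e4 : a - w = (a - z) - t • v := by rw [hw]; abel
    have ht0 : (0:ℝ) ≤ t := ht.le
    have h1t : (0:ℝ) ≤ 1 - t := by linarith
    have ns1 : ‖w - z‖^2 = t^2 * n := by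
      rw [e1, norm_smul, mul_pow, hn]; simp [sq_abs]
    have ns2 : ‖w - xs‖^2 = (1-t)^2 * n := by
      rw [norm_sub_rev, e2, norm_smul, mul_pow, hn]; simp [sq_abs]
    have ns3 : ‖a - w‖^2 = ‖a - z‖^2 - 2*(t*i) + t^2*n := by
      rw [e4, norm_sub_sq_real, norm_smul, mul_pow, real_inner_smul_right, hn, hi]
      simp [sq_abs]
    have s1 := hsc w z
    have s2 := hsc w xs
    rw [e3, real_inner_smul_right, ns1] at s1
    rw [e2, real_inner_smul_right, ns2] at s2
    set ip : ℝ := ⟪f' w, v⟫ with hip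
    have s1' : μ/2*(t^2*n) ≤ f z - f w + t*ip := by linarith [s1]
    have s2' : μ/2*((1-t)^2*n) ≤ f xs - f w - (1-t)*ip := by linarith [s2]
    have m1 := mul_le_mul_of_nonneg_left s1' h1t
    have m2 := mul_le_mul_of_nonneg_left s2' ht0
    have hzw := hz w
    rw [ns3] at hzw
    have hmz := hmin z
    have comb : t * ((μ/4 * i + μ/2 * n) - (5*μ/8) * n * t) ≤ t * 0 := by
      nlinarith [m1, m2, hzw, hmz]
    have := le_of_mul_le_mul_left comb ht
    linarith
  have hA : μ/4 * i + μ/2 * n ≤ 0 := by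
    refine le_of_forall_pos_le_add fun ε hε => ?_
    set C : ℝ := (5*μ/8) * n with hC
    have hC0 : 0 ≤ C := by positivity
    have htpos : 0 < min 1 (ε/(C+1)) := lt_min one_pos (by positivity)
    have h1 := h0 _ htpos (min_le_left _ _)
    have h2 : C * min 1 (ε/(C+1)) ≤ ε := by
      have h3 : min 1 (ε/(C+1)) ≤ ε/(C+1) := min_le_right _ _
      have h4 : C * min 1 (ε/(C+1)) ≤ C * (ε/(C+1)) :=
        mul_le_mul_of_nonneg_left h3 hC0
      have h5 : C * (ε/(C+1)) ≤ ε := by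
        rw [mul_div_assoc'] at *
        rw [div_le_iff₀ (by positivity : (0:ℝ) < C + 1)]
        nlinarith
      linarith
    have : C * min 1 (ε/(C+1)) = (5*μ/8) * n * min 1 (ε/(C+1)) := by rw [hC]
    linarith
  have hmul : μ * (i + 2*n) ≤ μ * 0 := by nlinarith [hA]
  have hi2 : i + 2*n ≤ 0 := le_of_mul_le_mul_left hmul hμ
  have e : a - xs = (a - z) - v := by rw [hv]; abel
  have expand : ‖(a - z) - v‖^2 = ‖a - z‖^2 - 2*i + n := by
    rw [norm_sub_sq_real, hi, hn]
  rw [e, expand]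
  linarith

/-- Strongly convex reduction (deterministic form): if each step contracts the divergence to the
minimizer of the proximal subproblem `x ↦ f(x) + (μ/4)V_{x_k}(x)` by a factor `1/4`, then the
divergence to the minimizer `x⋆` of `f` halves each iteration. -/
theorem stmt_17 {X : Type*} [NormedAddCommGroup X] [InnerProductSpace ℝ X]
    [FiniteDimensional ℝ X]
    (μ : ℝ) (hμ : 0 < μ)
    (f : X → ℝ) (f' : X → X)
    (hdiff : ∀ x, HasGradientAt f (f' x) x)
    -- `f` is `μ`-strongly convex
    (hsc : ∀ u u' : X, f u' - f u - ⟪f' u, u' - u⟫ ≥ μ / 2 * ‖u - u'‖ ^ 2)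
    -- `x⋆` minimizes `f`
    (xs : X) (hmin : ∀ x : X, f xs ≤ f x)
    (x : ℕ → X)
    -- each step contracts the divergence to the minimizer of the proximal subproblem
    (hstep : ∀ (k : ℕ) (z : X),
      (∀ x' : X, f z + μ / 4 * (1 / 2 * ‖x k - z‖ ^ 2)
          ≤ f x' + μ / 4 * (1 / 2 * ‖x k - x'‖ ^ 2)) →
      1 / 2 * ‖x (k + 1) - z‖ ^ 2 ≤ 1 / 4 * (1 / 2 * ‖x k - z‖ ^ 2)) :
    ∀ k : ℕ, 1 / 2 * ‖x k - xs‖ ^ 2 ≤ (1 / 2 : ℝ) ^ k * (1 / 2 * ‖x 0 - xs‖ ^ 2) := by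
  have hfc : Continuous f := by
    have : Differentiable ℝ f := fun y => (hdiff y).differentiableAt
    exact this.continuous
  have keystep : ∀ k : ℕ, ‖x (k+1) - xs‖^2 ≤ 1/2 * ‖x k - xs‖^2 := by
    intro k
    obtain ⟨z, hz⟩ := exists_min' f hfc (f xs) hmin (x k) (μ/8) (by positivity)
    have hz' : ∀ x' : X, f z + μ / 4 * (1 / 2 * ‖x k - z‖ ^ 2)
        ≤ f x' + μ / 4 * (1 / 2 * ‖x k - x'‖ ^ 2) := by
      intro x'
      have := hz x'
      ring_nf at this ⊢
      linarith
    have hcontr := hstep k z hz'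
    have hkey := key' μ hμ f f' hsc xs hmin (x k) z hz
    have htri : ‖x (k+1) - xs‖ ≤ ‖x (k+1) - z‖ + ‖z - xs‖ :=
      norm_sub_le_norm_sub_add_norm_sub _ _ _
    have h1 : ‖x (k+1) - xs‖^2 ≤ 2*‖x (k+1) - z‖^2 + 2*‖z - xs‖^2 := by
      nlinarith [norm_nonneg (x (k+1) - xs), norm_nonneg (x (k+1) - z),
        norm_nonneg (z - xs), sq_nonneg (‖x (k+1) - z‖ - ‖z - xs‖)]
    have hrev : ‖z - xs‖ = ‖xs - z‖ := norm_sub_rev _ _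
    rw [hrev] at h1
    have hB : (0:ℝ) ≤ ‖xs - z‖^2 := sq_nonneg _
    linarith
  intro k
  induction k with
  | zero => simp
  | succ k ih =>
    have := keystep k
    have h2 : (0:ℝ) < (1/2 : ℝ)^k := by positivity
    calc 1/2 * ‖x (k+1) - xs‖^2 ≤ 1/2 * (1/2 * ‖x k - xs‖^2) := by linarith
      _ ≤ 1/2 * ((1/2:ℝ)^k * (1/2 * ‖x 0 - xs‖^2)) := by linarith
      _ = (1/2:ℝ)^(k+1) * (1/2 * ‖x 0 - xs‖^2) := by ring
end

section
/- Strongly convex-concave reduction (deterministic form): let F : 𝒳 × 𝒴 → ℝ be differentiable, with F(·, y) μ^x-strongly convex for every y and F(x, ·) μ^y-strongly concave for every x, and with saddle point z⋆ = (x⋆, y⋆). Define V^ω_z(z') := (μ^x/2)‖z^x − z'^x‖² + (μ^y/2)‖z^y − z'^y‖². Let (z_k)_{k≥0} be a sequence in 𝒳 × 𝒴 such that for every k there exists a saddle point z⋆_{k+1} of (x, y) ↦ F(x, y) + (μ^x/4)V_{z^x_k}(x) − (μ^y/4)V_{z^y_k}(y) and V^ω_{z_{k+1}}(z⋆_{k+1})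 ≤ (1/4)·V^ω_{z_k}(z⋆_{k+1}). Then for every k ≥ 0: V^ω_{z_k}(z⋆) ≤ 2^{−k}·V^ω_{z₀}(z⋆). -/
open scoped RealInnerProductSpace

lemma aux_sq_smul {X : Type*} [NormedAddCommGroup X] [InnerProductSpace ℝ X]
    (t : ℝ) (v : X) : ‖t • v‖ ^ 2 = t ^ 2 * ‖v‖ ^ 2 := by
  rw [norm_smul, Real.norm_eq_abs, mul_pow, sq_abs]

lemma aux_amgm (S T : ℝ) (hS : 0 ≤ S) (hT : 0 ≤ T) :
    Real.sqrt S * Real.sqrt T ≤ (S + T) / 2 := by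
  nlinarith [sq_nonneg (Real.sqrt S - Real.sqrt T), Real.sq_sqrt hS, Real.sq_sqrt hT]

lemma aux_limit (K D : ℝ) (hK : 0 ≤ K)
    (h : ∀ t : ℝ, 0 < t → t ≤ 1 → K - t * K ≤ D) : K ≤ D := by
  by_contra hcon
  push_neg at hcon
  have hKD : 0 < (K - D) / 2 / (K + 1) := div_pos (by linarith) (by linarith)
  have ht0 : 0 < min 1 ((K - D) / 2 / (K + 1)) := lt_min one_pos hKD
  have h1 := h _ ht0 (min_le_left _ _)
  have h2 : min 1 ((K - D) / 2 / (K + 1)) * K ≤ ((K - D) / 2 / (K + 1)) * K :=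
    mul_le_mul_of_nonneg_right (min_le_right _ _) hK
  have h3 : ((K - D) / 2 / (K + 1)) * K ≤ (K - D) / 2 := by
    rw [div_mul_eq_mul_div, div_le_iff₀ (by linarith : (0:ℝ) < K + 1)]
    nlinarith [mul_le_mul_of_nonneg_left (by linarith : K ≤ K + 1)
      (by linarith : (0:ℝ) ≤ (K - D) / 2)]
  linarith

/-- A `μ`-strongly convex function plus a quadratic `ν`-prox term, minimized at `xh`,
grows at least quadratically away from the minimizer. -/
lemma aux_min {X : Type*} [NormedAddCommGroup X] [InnerProductSpace ℝ X]
    (μ ν : ℝ) (hμ : 0 < μ) (hν : 0 ≤ ν)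
    (f : X → ℝ) (g : X → X)
    (hsc : ∀ u u' : X, f u' - f u - ⟪g u, u' - u⟫ ≥ μ / 2 * ‖u - u'‖ ^ 2)
    (c xh : X)
    (hmin : ∀ x : X, f xh + ν * (1 / 2 * ‖c - xh‖ ^ 2) ≤ f x + ν * (1 / 2 * ‖c - x‖ ^ 2))
    (x : X) :
    f xh + ν * (1 / 2 * ‖c - xh‖ ^ 2) + (μ + ν) / 2 * ‖x - xh‖ ^ 2
      ≤ f x + ν * (1 / 2 * ‖c - x‖ ^ 2) := by
  have hd2nn : (0:ℝ) ≤ ‖x - xh‖ ^ 2 := sq_nonneg _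
  have hproxx : ‖c - x‖ ^ 2 = ‖c - xh‖ ^ 2 - 2 * ⟪c - xh, x - xh⟫ + ‖x - xh‖ ^ 2 := by
    have h : c - x = (c - xh) - (x - xh) := by abel
    rw [h, norm_sub_sq_real]
  have main : ∀ t : ℝ, 0 < t → t ≤ 1 →
      (μ + ν) / 2 * ‖x - xh‖ ^ 2 - t * ((μ + ν) / 2 * ‖x - xh‖ ^ 2)
        ≤ (f x + ν * (1 / 2 * ‖c - x‖ ^ 2)) - (f xh + ν * (1 / 2 * ‖c - xh‖ ^ 2)) := by
    intro t ht0 ht1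
    set w := xh + t • (x - xh) with hw
    have hwxh : w - xh = t • (x - xh) := by rw [hw]; abel
    have hxw : x - w = (1 - t) • (x - xh) := by rw [hw, sub_smul, one_smul]; abel
    have hxhw : xh - w = (-t) • (x - xh) := by rw [hw, neg_smul]; abel
    have hcw : c - w = (c - xh) - t • (x - xh) := by rw [hw]; abel
    have h1 := hsc w xh
    have h2 := hsc w x
    rw [hxhw, hwxh, real_inner_smul_right, aux_sq_smul] at h1
    rw [norm_sub_rev w x, hxw, real_inner_smul_right, aux_sq_smul] at h2
    have hproxw : ‖c - w‖ ^ 2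
        = ‖c - xh‖ ^ 2 - 2 * (t * ⟪c - xh, x - xh⟫) + t ^ 2 * ‖x - xh‖ ^ 2 := by
      rw [hcw, norm_sub_sq_real, real_inner_smul_right, aux_sq_smul]
    have hm := hmin w
    rw [hproxw] at hm
    have hq1 : 0 ≤ (1 - t) *
        (f xh - f w + t * ⟪g w, x - xh⟫ - μ / 2 * (t ^ 2 * ‖x - xh‖ ^ 2)) :=
      mul_nonneg (by linarith) (by linarith [h1])
    have hq2 : 0 ≤ t *
        (f x - f w - (1 - t) * ⟪g w, x - xh⟫ - μ / 2 * ((1 - t) ^ 2 * ‖x - xh‖ ^ 2)) :=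
      mul_nonneg ht0.le (by linarith [h2])
    have hq3 : 0 ≤ f w + ν * (1 / 2 * (‖c - xh‖ ^ 2 - 2 * (t * ⟪c - xh, x - xh⟫)
        + t ^ 2 * ‖x - xh‖ ^ 2)) - (f xh + ν * (1 / 2 * ‖c - xh‖ ^ 2)) := by
      linarith [hm]
    have hsum : t * ((f x + ν * (1 / 2 * (‖c - xh‖ ^ 2 - 2 * ⟪c - xh, x - xh⟫
            + ‖x - xh‖ ^ 2))) - (f xh + ν * (1 / 2 * ‖c - xh‖ ^ 2)))
          - t * ((μ + ν) / 2 * ((1 - t) * ‖x - xh‖ ^ 2))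
        = (1 - t) *
            (f xh - f w + t * ⟪g w, x - xh⟫ - μ / 2 * (t ^ 2 * ‖x - xh‖ ^ 2))
          + t *
            (f x - f w - (1 - t) * ⟪g w, x - xh⟫ - μ / 2 * ((1 - t) ^ 2 * ‖x - xh‖ ^ 2))
          + (f w + ν * (1 / 2 * (‖c - xh‖ ^ 2 - 2 * (t * ⟪c - xh, x - xh⟫)
            + t ^ 2 * ‖x - xh‖ ^ 2)) - (f xh + ν * (1 / 2 * ‖c - xh‖ ^ 2))) := by
      ring
    have h0 : 0 ≤ t * ((f x + ν * (1 / 2 * (‖c - xh‖ ^ 2 - 2 * ⟪c - xh, x - xh⟫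
            + ‖x - xh‖ ^ 2))) - (f xh + ν * (1 / 2 * ‖c - xh‖ ^ 2)))
          - t * ((μ + ν) / 2 * ((1 - t) * ‖x - xh‖ ^ 2)) := by
      rw [hsum]
      exact add_nonneg (add_nonneg hq1 hq2) hq3
    have keyt : t * ((μ + ν) / 2 * ((1 - t) * ‖x - xh‖ ^ 2))
        ≤ t * ((f x + ν * (1 / 2 * (‖c - xh‖ ^ 2 - 2 * ⟪c - xh, x - xh⟫
            + ‖x - xh‖ ^ 2))) - (f xh + ν * (1 / 2 * ‖c - xh‖ ^ 2))) :=
      sub_nonneg.mp h0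
    have hdiv := le_of_mul_le_mul_left keyt ht0
    have he : (μ + ν) / 2 * ((1 - t) * ‖x - xh‖ ^ 2)
        = (μ + ν) / 2 * ‖x - xh‖ ^ 2 - t * ((μ + ν) / 2 * ‖x - xh‖ ^ 2) := by ring
    rw [hproxx]
    linarith [hdiv, he.le, he.ge]
  have hfin := aux_limit ((μ + ν) / 2 * ‖x - xh‖ ^ 2)
    ((f x + ν * (1 / 2 * ‖c - x‖ ^ 2)) - (f xh + ν * (1 / 2 * ‖c - xh‖ ^ 2)))
    (by positivity) main
  linarith

set_option maxHeartbeats 1000000 in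
/-- Strongly convex-concave reduction (deterministic form): if each step contracts (in the
weighted divergence `V^ω`) the distance to a saddle point of the proximal subproblem
`(x, y) ↦ F(x, y) + (μˣ/4)V_{zˣ_k}(x) − (μʸ/4)V_{zʸ_k}(y)` by a factor `1/4`, then the
divergence to the saddle point `z⋆` of `F` halves each iteration. -/
theorem stmt_18 {X Y : Type*} [NormedAddCommGroup X] [InnerProductSpace ℝ X]
    [FiniteDimensional ℝ X] [NormedAddCommGroup Y] [InnerProductSpace ℝ Y]
    [FiniteDimensional ℝ Y]
    (μx μy : ℝ) (hμx : 0 < μx) (hμy : 0 < μy)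
    (F : X × Y → ℝ) (hFd : Differentiable ℝ F)
    (Fx' : X × Y → X) (Fy' : X × Y → Y)
    (hdx : ∀ p : X × Y, HasGradientAt (fun x => F (x, p.2)) (Fx' p) p.1)
    (hdy : ∀ p : X × Y, HasGradientAt (fun y => F (p.1, y)) (Fy' p) p.2)
    -- `F(·, y)` is `μˣ`-strongly convex for every `y`
    (hscx : ∀ (y : Y) (u u' : X),
      F (u', y) - F (u, y) - ⟪Fx' (u, y), u' - u⟫ ≥ μx / 2 * ‖u - u'‖ ^ 2)
    -- `F(x, ·)` is `μʸ`-strongly concave for every `x`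
    (hscy : ∀ (x : X) (v v' : Y),
      F (x, v') - F (x, v) - ⟪Fy' (x, v), v' - v⟫ ≤ -(μy / 2) * ‖v - v'‖ ^ 2)
    -- saddle point `z⋆ = (x⋆, y⋆)` of `F`
    (xs : X) (ys : Y)
    (hsaddle₁ : ∀ y : Y, F (xs, y) ≤ F (xs, ys))
    (hsaddle₂ : ∀ x : X, F (xs, ys) ≤ F (x, ys))
    (z : ℕ → X × Y)
    -- each step: there is a saddle point of the proximal subproblem whose `V^ω`-divergence from
    -- the next iterate is at most a quarter of that from the current iterate
    (hstep : ∀ k : ℕ, ∃ zs : X × Y,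
      ((∀ y : Y,
          F (zs.1, y) + μx / 4 * (1 / 2 * ‖(z k).1 - zs.1‖ ^ 2)
              - μy / 4 * (1 / 2 * ‖(z k).2 - y‖ ^ 2)
            ≤ F zs + μx / 4 * (1 / 2 * ‖(z k).1 - zs.1‖ ^ 2)
              - μy / 4 * (1 / 2 * ‖(z k).2 - zs.2‖ ^ 2)) ∧
        (∀ x : X,
          F zs + μx / 4 * (1 / 2 * ‖(z k).1 - zs.1‖ ^ 2)
              - μy / 4 * (1 / 2 * ‖(z k).2 - zs.2‖ ^ 2)
            ≤ F (x, zs.2) + μx / 4 * (1 / 2 * ‖(z k).1 - x‖ ^ 2)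
              - μy / 4 * (1 / 2 * ‖(z k).2 - zs.2‖ ^ 2))) ∧
      μx / 2 * ‖(z (k + 1)).1 - zs.1‖ ^ 2 + μy / 2 * ‖(z (k + 1)).2 - zs.2‖ ^ 2
        ≤ 1 / 4 * (μx / 2 * ‖(z k).1 - zs.1‖ ^ 2 + μy / 2 * ‖(z k).2 - zs.2‖ ^ 2)) :
    ∀ k : ℕ,
      μx / 2 * ‖(z k).1 - xs‖ ^ 2 + μy / 2 * ‖(z k).2 - ys‖ ^ 2
        ≤ (1 / 2 : ℝ) ^ k *
            (μx / 2 * ‖(z 0).1 - xs‖ ^ 2 + μy / 2 * ‖(z 0).2 - ys‖ ^ 2) := by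
  have key : ∀ k : ℕ,
      μx / 2 * ‖(z (k + 1)).1 - xs‖ ^ 2 + μy / 2 * ‖(z (k + 1)).2 - ys‖ ^ 2
        ≤ 1 / 2 * (μx / 2 * ‖(z k).1 - xs‖ ^ 2 + μy / 2 * ‖(z k).2 - ys‖ ^ 2) := by
    intro k
    obtain ⟨zs, ⟨hmaxy, hminx⟩, hcontr⟩ := hstep k
    have hFzs : F zs = F (zs.1, zs.2) := by rw [Prod.mk.eta]
    -- minimality in x for the proximal subproblem
    have hminx' : ∀ x : X, F (zs.1, zs.2) + μx / 4 * (1 / 2 * ‖(z k).1 - zs.1‖ ^ 2)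
        ≤ F (x, zs.2) + μx / 4 * (1 / 2 * ‖(z k).1 - x‖ ^ 2) := by
      intro x; have h := hminx x; rw [hFzs] at h; linarith
    have R1 : F (zs.1, zs.2) + μx / 4 * (1 / 2 * ‖(z k).1 - zs.1‖ ^ 2)
          + (μx + μx / 4) / 2 * ‖xs - zs.1‖ ^ 2
        ≤ F (xs, zs.2) + μx / 4 * (1 / 2 * ‖(z k).1 - xs‖ ^ 2) :=
      aux_min μx (μx / 4) hμx (by positivity) (fun u => F (u, zs.2))
        (fun u => Fx' (u, zs.2)) (fun u u' => hscx zs.2 u u') (z k).1 zs.1 hminx' xs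
    -- maximality in y for the proximal subproblem
    have hsc2 : ∀ v v' : Y, (fun v => -F (zs.1, v)) v' - (fun v => -F (zs.1, v)) v
        - ⟪(fun v => -Fy' (zs.1, v)) v, v' - v⟫ ≥ μy / 2 * ‖v - v'‖ ^ 2 := by
      intro v v'
      have h := hscy zs.1 v v'
      simp only [inner_neg_left]
      linarith
    have hmin2 : ∀ y : Y, -F (zs.1, zs.2) + μy / 4 * (1 / 2 * ‖(z k).2 - zs.2‖ ^ 2)
        ≤ -F (zs.1, y) + μy / 4 * (1 / 2 * ‖(z k).2 - y‖ ^ 2) := by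
      intro y; have h := hmaxy y; rw [hFzs] at h; linarith
    have R2 : -F (zs.1, zs.2) + μy / 4 * (1 / 2 * ‖(z k).2 - zs.2‖ ^ 2)
          + (μy + μy / 4) / 2 * ‖ys - zs.2‖ ^ 2
        ≤ -F (zs.1, ys) + μy / 4 * (1 / 2 * ‖(z k).2 - ys‖ ^ 2) :=
      aux_min μy (μy / 4) hμy (by positivity) (fun v => -F (zs.1, v))
        (fun v => -Fy' (zs.1, v)) hsc2 (z k).2 zs.2 hmin2 ys
    -- strong convexity of F(·, ys) at its minimizer xs
    have hmin3 : ∀ x : X, F (xs, ys) + (0:ℝ) * (1 / 2 * ‖xs - xs‖ ^ 2)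
        ≤ F (x, ys) + (0:ℝ) * (1 / 2 * ‖xs - x‖ ^ 2) := by
      intro x; have := hsaddle₂ x; linarith
    have R3 : F (xs, ys) + (0:ℝ) * (1 / 2 * ‖xs - xs‖ ^ 2)
          + (μx + 0) / 2 * ‖zs.1 - xs‖ ^ 2
        ≤ F (zs.1, ys) + (0:ℝ) * (1 / 2 * ‖xs - zs.1‖ ^ 2) :=
      aux_min μx 0 hμx le_rfl (fun u => F (u, ys)) (fun u => Fx' (u, ys))
        (fun u u' => hscx ys u u') xs xs hmin3 zs.1
    -- strong concavity of F(xs, ·) at its maximizer ys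
    have hsc4 : ∀ v v' : Y, (fun v => -F (xs, v)) v' - (fun v => -F (xs, v)) v
        - ⟪(fun v => -Fy' (xs, v)) v, v' - v⟫ ≥ μy / 2 * ‖v - v'‖ ^ 2 := by
      intro v v'
      have h := hscy xs v v'
      simp only [inner_neg_left]
      linarith
    have hmin4 : ∀ y : Y, -F (xs, ys) + (0:ℝ) * (1 / 2 * ‖ys - ys‖ ^ 2)
        ≤ -F (xs, y) + (0:ℝ) * (1 / 2 * ‖ys - y‖ ^ 2) := by
      intro y; have := hsaddle₁ y; linarith
    have R4 : -F (xs, ys) + (0:ℝ) * (1 / 2 * ‖ys - ys‖ ^ 2)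
          + (μy + 0) / 2 * ‖zs.2 - ys‖ ^ 2
        ≤ -F (xs, zs.2) + (0:ℝ) * (1 / 2 * ‖ys - zs.2‖ ^ 2) :=
      aux_min μy 0 hμy le_rfl (fun v => -F (xs, v)) (fun v => -Fy' (xs, v))
        hsc4 ys ys hmin4 zs.2
    have e1 : ‖xs - zs.1‖ ^ 2 = ‖zs.1 - xs‖ ^ 2 := by rw [norm_sub_rev]
    have e2 : ‖ys - zs.2‖ ^ 2 = ‖zs.2 - ys‖ ^ 2 := by rw [norm_sub_rev]
    rw [e1] at R1
    rw [e2] at R2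
    have fact1 : 9 * (μx * ‖zs.1 - xs‖ ^ 2 + μy * ‖zs.2 - ys‖ ^ 2)
          + (μx * ‖(z k).1 - zs.1‖ ^ 2 + μy * ‖(z k).2 - zs.2‖ ^ 2)
        ≤ μx * ‖(z k).1 - xs‖ ^ 2 + μy * ‖(z k).2 - ys‖ ^ 2 := by
      linarith [R1, R2, R3, R4]
    -- decomposition of the next iterate's distance to the saddle point
    have hd1 : (z (k + 1)).1 - xs = ((z (k + 1)).1 - zs.1) + (zs.1 - xs) := by abel
    have hd2 : (z (k + 1)).2 - ys = ((z (k + 1)).2 - zs.2) + (zs.2 - ys) := by abel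
    have hn1 : ‖(z (k + 1)).1 - xs‖ ^ 2 = ‖(z (k + 1)).1 - zs.1‖ ^ 2
        + 2 * ⟪(z (k + 1)).1 - zs.1, zs.1 - xs⟫ + ‖zs.1 - xs‖ ^ 2 := by
      rw [hd1, norm_add_sq_real]
    have hn2 : ‖(z (k + 1)).2 - ys‖ ^ 2 = ‖(z (k + 1)).2 - zs.2‖ ^ 2
        + 2 * ⟪(z (k + 1)).2 - zs.2, zs.2 - ys⟫ + ‖zs.2 - ys‖ ^ 2 := by
      rw [hd2, norm_add_sq_real]
    set S := μx * ‖(z (k + 1)).1 - zs.1‖ ^ 2 + μy * ‖(z (k + 1)).2 - zs.2‖ ^ 2 with hS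
    set T := μx * ‖zs.1 - xs‖ ^ 2 + μy * ‖zs.2 - ys‖ ^ 2 with hT
    clear_value S T
    have hSnn : (0:ℝ) ≤ S := by rw [hS]; positivity
    have hTnn : (0:ℝ) ≤ T := by rw [hT]; positivity
    have hs2 : Real.sqrt S ^ 2 = S := Real.sq_sqrt hSnn
    have ht2 : Real.sqrt T ^ 2 = T := Real.sq_sqrt hTnn
    have hs0 : 0 ≤ Real.sqrt S := Real.sqrt_nonneg _
    have ht0 : 0 ≤ Real.sqrt T := Real.sqrt_nonneg _
    -- weighted Cauchy–Schwarz
    have hi1 : ⟪(z (k + 1)).1 - zs.1, zs.1 - xs⟫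
        ≤ ‖(z (k + 1)).1 - zs.1‖ * ‖zs.1 - xs‖ := real_inner_le_norm _ _
    have hi2 : ⟪(z (k + 1)).2 - zs.2, zs.2 - ys⟫
        ≤ ‖(z (k + 1)).2 - zs.2‖ * ‖zs.2 - ys‖ := real_inner_le_norm _ _
    have hcs : μx * ⟪(z (k + 1)).1 - zs.1, zs.1 - xs⟫
          + μy * ⟪(z (k + 1)).2 - zs.2, zs.2 - ys⟫
        ≤ Real.sqrt S * Real.sqrt T := by
      set a1 := ‖(z (k + 1)).1 - zs.1‖
      set b1 := ‖zs.1 - xs‖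
      set a2 := ‖(z (k + 1)).2 - zs.2‖
      set b2 := ‖zs.2 - ys‖
      have ha1 : 0 ≤ a1 := norm_nonneg _
      have hb1 : 0 ≤ b1 := norm_nonneg _
      have ha2 : 0 ≤ a2 := norm_nonneg _
      have hb2 : 0 ≤ b2 := norm_nonneg _
      have hL : (0:ℝ) ≤ μx * (a1 * b1) + μy * (a2 * b2) := by positivity
      have hsq : (μx * (a1 * b1) + μy * (a2 * b2)) ^ 2 ≤ S * T := by
        rw [hS, hT]
        have hnn : 0 ≤ μx * μy * (a1 * b2 - a2 * b1) ^ 2 :=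
          mul_nonneg (mul_pos hμx hμy).le (sq_nonneg _)
        have hid : (μx * a1 ^ 2 + μy * a2 ^ 2) * (μx * b1 ^ 2 + μy * b2 ^ 2)
              - (μx * (a1 * b1) + μy * (a2 * b2)) ^ 2
            = μx * μy * (a1 * b2 - a2 * b1) ^ 2 := by ring
        linarith [hnn, hid.le, hid.ge]
      have hle : μx * (a1 * b1) + μy * (a2 * b2) ≤ Real.sqrt (S * T) := by
        calc μx * (a1 * b1) + μy * (a2 * b2)
            = Real.sqrt ((μx * (a1 * b1) + μy * (a2 * b2)) ^ 2) := (Real.sqrt_sq hL).symm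
          _ ≤ Real.sqrt (S * T) := Real.sqrt_le_sqrt hsq
      rw [Real.sqrt_mul hSnn] at hle
      have hm1 : μx * ⟪(z (k + 1)).1 - zs.1, zs.1 - xs⟫ ≤ μx * (a1 * b1) :=
        mul_le_mul_of_nonneg_left hi1 hμx.le
      have hm2 : μy * ⟪(z (k + 1)).2 - zs.2, zs.2 - ys⟫ ≤ μy * (a2 * b2) :=
        mul_le_mul_of_nonneg_left hi2 hμy.le
      linarith
    have hSEF : S ≤ 1 / 4 * (μx * ‖(z k).1 - zs.1‖ ^ 2 + μy * ‖(z k).2 - zs.2‖ ^ 2) := by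
      rw [hS]; linarith [hcontr]
    have hst : Real.sqrt S * Real.sqrt T ≤ (S + T) / 2 := aux_amgm S T hSnn hTnn
    have hgoal : S / 2 + Real.sqrt S * Real.sqrt T + T / 2
        ≤ 1 / 4 * (μx * ‖(z k).1 - xs‖ ^ 2 + μy * ‖(z k).2 - ys‖ ^ 2) := by
      have hTfact : 9 * T + (μx * ‖(z k).1 - zs.1‖ ^ 2 + μy * ‖(z k).2 - zs.2‖ ^ 2)
          ≤ μx * ‖(z k).1 - xs‖ ^ 2 + μy * ‖(z k).2 - ys‖ ^ 2 := by
        linarith [fact1]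
      linarith [hst, hSEF, hTfact, hTnn]
    rw [hn1, hn2]
    have hring : μx / 2 * (‖(z (k + 1)).1 - zs.1‖ ^ 2
          + 2 * ⟪(z (k + 1)).1 - zs.1, zs.1 - xs⟫ + ‖zs.1 - xs‖ ^ 2)
        + μy / 2 * (‖(z (k + 1)).2 - zs.2‖ ^ 2
          + 2 * ⟪(z (k + 1)).2 - zs.2, zs.2 - ys⟫ + ‖zs.2 - ys‖ ^ 2)
        = S / 2 + (μx * ⟪(z (k + 1)).1 - zs.1, zs.1 - xs⟫
          + μy * ⟪(z (k + 1)).2 - zs.2, zs.2 - ys⟫) + T / 2 := by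
      rw [hS, hT]; ring
    linarith [hring.le, hring.ge, hcs, hgoal]
  intro k
  induction k with
  | zero => norm_num
  | succ n ih =>
    have hk := key n
    have hpow : (1 / 2 : ℝ) ^ (n + 1) = 1 / 2 * (1 / 2 : ℝ) ^ n := by
      rw [pow_succ]; ring
    rw [hpow]
    linarith [hk, ih]
end

section
/- Separable-block relative Lipschitzness for minimax finite sums: fix n ≥ 1, γ ≥ 0, μ^x, μ^y > 0, an anchor tuple (x̄, ȳ, ū₁, …, ūₙ, v̄₁, …, v̄ₙ), indices j, k ∈ [n], and weights p_j ≥ 1/(2n), q_k ≥ 1/(2n). For a tuple z = (z^x, z^y, z^{u_1}, …, z^{u_n}, z^{v_1}, …, z^{v_n}) define the sparse separable operator Φ^sep_{jk}(z) with 𝒳-block (1+γ)μ^x z^x − γμ^x x̄, 𝒴-block (1+γ)μ^y z^y − γμ^y ȳ, j-th f-dual block (1/(n p_j))((1+γ)z^{u_j} − γ ū_j), k-th g-dual block (1/(n q_k))((1+γ)z^{v_k} − γ v̄_k), and all other blocks zero. Then for all tuples w, w', w'' in 𝒳 × 𝒴 × 𝒳ⁿ × 𝒴ⁿ: ⟨Φ^sep_{jk}(w')^x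 − Φ^sep_{jk}(w)^x, w'^x − w''^x⟩ + ⟨Φ^sep_{jk}(w')^y − Φ^sep_{jk}(w)^y, w'^y − w''^y⟩ + ⟨Φ^sep_{jk}(w')^{f_j} − Φ^sep_{jk}(w)^{f_j}, ∇f_j(w'^{u_j}) − ∇f_j(w''^{u_j})⟩ + ⟨Φ^sep_{jk}(w')^{g_k} − Φ^sep_{jk}(w)^{g_k}, ∇g_k(w'^{v_k}) − ∇g_k(w''^{v_k})⟩ ≤ 2n(1+γ)·(V^r_w(w') + V^r_{w'}(w'')), where V^r_z(z') := μ^x V_{z^x}(z'^x) + μ^y V_{z^y}(z'^y) + (1/n)∑_{i=1}^n V^{f_i}_{z'^{u_i}}(z^{u_i}) + (1/n)∑_{i=1}^n V^{g_i}_{z'^{v_i}}(z^{v_i}). -/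
open scoped RealInnerProductSpace

/-!
Each nonzero block of `Φ^sep_{jk}` is affine with slope `c`, so it contributes
`c ⟪w' - w, ∇φ(w') - ∇φ(w'')⟫` with `φ = ½‖·‖²` on the primal blocks and `φ = f_j`, `g_k` on the
dual ones. The three-point identity of Bregman divergences bounds this inner product by
`V^φ_{w'}(w) + V^φ_{w''}(w')`, and for the dual blocks one coordinate of a sum of nonnegative
divergences is at most the whole sum. Finally `n ≥ 1` and `p_j, q_k ≥ 1/(2n)` bound each slope by
`2n(1+γ)` times the weight of that block in `r`.
-/

/-- Bregman divergence `V^φ_u(v) = φ(v) - φ(u) - ⟪∇φ(u), v - u⟫`, with explicit gradient `φ'`. -/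
noncomputable def breg {X : Type*} [NormedAddCommGroup X] [InnerProductSpace ℝ X]
    (φ : X → ℝ) (φ' : X → X) (u v : X) : ℝ :=
  φ v - φ u - ⟪φ' u, v - u⟫

section Bregman

variable {E : Type*} [NormedAddCommGroup E] [InnerProductSpace ℝ E]

theorem inner_sub_sub_le_half_sq_add_half_sq (w w' w'' : E) :
    ⟪w' - w, w' - w''⟫ ≤ 1 / 2 * ‖w - w'‖ ^ 2 + 1 / 2 * ‖w' - w''‖ ^ 2 := by
  have h := norm_sub_sq_real (w' - w) (w' - w'')
  rw [norm_sub_rev w w']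
  nlinarith [norm_nonneg ((w' - w) - (w' - w''))]

theorem breg_three_point (φ : E → ℝ) (φ' : E → E) (u u' u'' : E) :
    ⟪u' - u, φ' u' - φ' u''⟫ = breg φ φ' u' u + breg φ φ' u'' u' - breg φ φ' u'' u := by
  simp only [breg, inner_sub_left, inner_sub_right, real_inner_comm u, real_inner_comm u']
  ring

variable [CompleteSpace E] {φ : E → ℝ} {φ' : E → E}

theorem ConvexOn.inner_gradient_le_sub (hφ : ConvexOn ℝ Set.univ φ)
    (hφ' : ∀ x, HasGradientAt φ (φ' x) x) (u v : E) :
    ⟪φ' u, v - u⟫ ≤ φ v - φ u := by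
  set A : ℝ →ᵃ[ℝ] E := AffineMap.lineMap u v
  have hconv : ConvexOn ℝ Set.univ (φ ∘ A) := by
    simpa only [Set.preimage_univ] using hφ.comp_affineMap A
  have hderiv : HasDerivAt (φ ∘ A) ⟪φ' u, v - u⟫ 0 :=
    (hφ' u).hasFDerivAt.comp_hasDerivAt_of_eq 0 AffineMap.hasDerivAt_lineMap
      (AffineMap.lineMap_apply_zero u v).symm
  have hslope : slope (φ ∘ A) 0 1 = φ v - φ u := by
    simp [slope_def_field, A]
  simpa [hslope] using
    hconv.le_slope_of_hasDerivAt (Set.mem_univ 0) (Set.mem_univ 1) zero_lt_one hderiv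

theorem breg_nonneg (hφ : ConvexOn ℝ Set.univ φ) (hφ' : ∀ x, HasGradientAt φ (φ' x) x)
    (u v : E) : 0 ≤ breg φ φ' u v := by
  have := hφ.inner_gradient_le_sub hφ' u v
  rw [breg]
  linarith

theorem inner_sub_gradient_sub_le_breg_add_breg (hφ : ConvexOn ℝ Set.univ φ)
    (hφ' : ∀ x, HasGradientAt φ (φ' x) x) (u u' u'' : E) :
    ⟪u' - u, φ' u' - φ' u''⟫ ≤ breg φ φ' u' u + breg φ φ' u'' u' := by
  rw [breg_three_point]
  linarith [breg_nonneg hφ hφ' u'' u]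

theorem sum_breg_nonneg {ι : Type*} [Fintype ι] {φ : ι → E → ℝ} {φ' : ι → E → E}
    (hφ : ∀ i, ConvexOn ℝ Set.univ (φ i)) (hφ' : ∀ i x, HasGradientAt (φ i) (φ' i x) x)
    (u u' : ι → E) : 0 ≤ ∑ i, breg (φ i) (φ' i) (u' i) (u i) :=
  Finset.sum_nonneg fun i _ => breg_nonneg (hφ i) (hφ' i) _ _

theorem inner_sub_gradient_sub_le_sum_breg {ι : Type*} [Fintype ι] {φ : ι → E → ℝ}
    {φ' : ι → E → E} (hφ : ∀ i, ConvexOn ℝ Set.univ (φ i))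
    (hφ' : ∀ i x, HasGradientAt (φ i) (φ' i x) x) (i : ι) (u u' u'' : ι → E) :
    ⟪u' i - u i, φ' i (u' i) - φ' i (u'' i)⟫
      ≤ ∑ l, breg (φ l) (φ' l) (u' l) (u l) + ∑ l, breg (φ l) (φ' l) (u'' l) (u' l) := by
  have hsingle (v v' : ι → E) :
      breg (φ i) (φ' i) (v' i) (v i) ≤ ∑ l, breg (φ l) (φ' l) (v' l) (v l) :=
    Finset.single_le_sum (fun l _ => breg_nonneg (hφ l) (hφ' l) _ _) (Finset.mem_univ i)
  exact (inner_sub_gradient_sub_le_breg_add_breg (hφ i) (hφ' i) _ _ _).trans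
    (add_le_add (hsingle u u') (hsingle u' u''))

end Bregman

theorem one_div_mul_le_two {n p : ℝ} (hn : 0 < n) (hp : 1 / (2 * n) ≤ p) : 1 / (n * p) ≤ 2 := by
  have hnp : 1 / 2 ≤ n * p := by
    calc 1 / 2 = n * (1 / (2 * n)) := by field_simp
      _ ≤ n * p := by gcongr
  rw [div_le_iff₀ (by linarith)]
  linarith

/-- Separable-block relative Lipschitzness for minimax finite sums: the sparse separable
operator `Φ^sep_{jk}` is `2n(1+γ)`-relatively Lipschitz with respect to the regularizer `r`. -/
theorem stmt_19 {X Y : Type*} [NormedAddCommGroup X] [InnerProductSpace ℝ X]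
    [FiniteDimensional ℝ X] [NormedAddCommGroup Y] [InnerProductSpace ℝ Y]
    [FiniteDimensional ℝ Y]
    (n : ℕ) (hn : 1 ≤ n) (μx μy : ℝ) (hμx : 0 < μx) (hμy : 0 < μy)
    (γ : ℝ) (hγ : 0 ≤ γ)
    (f : Fin n → X → ℝ) (f' : Fin n → X → X)
    (g : Fin n → Y → ℝ) (g' : Fin n → Y → Y)
    (hfconv : ∀ i, ConvexOn ℝ Set.univ (f i))
    (hgconv : ∀ i, ConvexOn ℝ Set.univ (g i))
    (hfd : ∀ i x, HasGradientAt (f i) (f' i x) x)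
    (hgd : ∀ i y, HasGradientAt (g i) (g' i y) y)
    -- anchor tuple
    (xbar : X) (ybar : Y) (ubar : Fin n → X) (vbar : Fin n → Y)
    -- sampled indices and weights
    (j k : Fin n) (pj qk : ℝ)
    (hpj : 1 / (2 * (n : ℝ)) ≤ pj) (hqk : 1 / (2 * (n : ℝ)) ≤ qk)
    -- three tuples `w`, `w'`, `w''`
    (wx w'x w''x : X) (wy w'y w''y : Y)
    (wu w'u w''u : Fin n → X) (wv w'v w''v : Fin n → Y) :
    ⟪(((1 + γ) * μx) • w'x - (γ * μx) • xbar) - (((1 + γ) * μx) • wx - (γ * μx) • xbar),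
        w'x - w''x⟫
      + ⟪(((1 + γ) * μy) • w'y - (γ * μy) • ybar) - (((1 + γ) * μy) • wy - (γ * μy) • ybar),
          w'y - w''y⟫
      + ⟪(1 / ((n : ℝ) * pj)) • ((1 + γ) • w'u j - γ • ubar j)
            - (1 / ((n : ℝ) * pj)) • ((1 + γ) • wu j - γ • ubar j),
          f' j (w'u j) - f' j (w''u j)⟫
      + ⟪(1 / ((n : ℝ) * qk)) • ((1 + γ) • w'v k - γ • vbar k)
            - (1 / ((n : ℝ) * qk)) • ((1 + γ) • wv k - γ • vbar k),
          g' k (w'v k) - g' k (w''v k)⟫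
    ≤ 2 * (n : ℝ) * (1 + γ) *
        ((μx * (1 / 2 * ‖wx - w'x‖ ^ 2) + μy * (1 / 2 * ‖wy - w'y‖ ^ 2)
            + (1 / (n : ℝ)) * ∑ i, breg (f i) (f' i) (w'u i) (wu i)
            + (1 / (n : ℝ)) * ∑ i, breg (g i) (g' i) (w'v i) (wv i))
          + (μx * (1 / 2 * ‖w'x - w''x‖ ^ 2) + μy * (1 / 2 * ‖w'y - w''y‖ ^ 2)
              + (1 / (n : ℝ)) * ∑ i, breg (f i) (f' i) (w''u i) (w'u i)
              + (1 / (n : ℝ)) * ∑ i, breg (g i) (g' i) (w''v i) (w'v i))) := by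
  have hn₁ : (1 : ℝ) ≤ n := by exact_mod_cast hn
  have hn₀ : (0 : ℝ) < n := by linarith
  have hprimal {μ t D : ℝ} (hμ : 0 < μ) (ht : t ≤ D) (hD : 0 ≤ D) :
      (1 + γ) * μ * t ≤ 2 * n * (1 + γ) * μ * D := by
    have hcoef : (1 + γ) * μ ≤ 2 * n * (1 + γ) * μ := by
      rw [mul_assoc (2 * (n : ℝ))]
      exact le_mul_of_one_le_left (by positivity) (by linarith)
    exact mul_le_mul_of_nonneg hcoef ht (by positivity) hD
  have hdual {p t D : ℝ} (hp : 1 / (2 * (n : ℝ)) ≤ p) (ht : t ≤ D) (hD : 0 ≤ D) :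
      1 / (n * p) * (1 + γ) * t ≤ 2 * n * (1 + γ) * (1 / n) * D := by
    have hp₀ : 0 < p := lt_of_lt_of_le (by positivity) hp
    have hcoef : 1 / (n * p) * (1 + γ) ≤ 2 * n * (1 + γ) * (1 / n) := by
      rw [show 2 * n * (1 + γ) * (1 / n) = 2 * (1 + γ) by field_simp]
      exact mul_le_mul_of_nonneg_right (one_div_mul_le_two hn₀ hp) (by linarith)
    exact mul_le_mul_of_nonneg hcoef ht (by positivity) hD
  simp only [sub_sub_sub_cancel_right, ← smul_sub, smul_smul, real_inner_smul_left]
  have hX := hprimal hμx (inner_sub_sub_le_half_sq_add_half_sq wx w'x w''x) (by positivity)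
  have hY := hprimal hμy (inner_sub_sub_le_half_sq_add_half_sq wy w'y w''y) (by positivity)
  have hF := hdual hpj (inner_sub_gradient_sub_le_sum_breg hfconv hfd j wu w'u w''u)
    (add_nonneg (sum_breg_nonneg hfconv hfd _ _) (sum_breg_nonneg hfconv hfd _ _))
  have hG := hdual hqk (inner_sub_gradient_sub_le_sum_breg hgconv hgd k wv w'v w''v)
    (add_nonneg (sum_breg_nonneg hgconv hgd _ _) (sum_breg_nonneg hgconv hgd _ _))
  linear_combination hX + hY + hF + hG
end
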